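/- arXiv:1606.03204 — 6 statements merged into one kernel-verified Lean document; each statement's English description precedes it below -/
import Mathlib

section
/- The three functions H = (p₁² + p₂²)/2 − 1/√(x²+y²), I₁ = p₂x − p₁y, and I₂ = p₂(p₁y − p₂x) + x/√(x²+y²) are functionally independent on the set {x² + y² ≠ 0}: there exists a point where the gradients of H, I₁, I₂ are linearly independent. -/
/-!
H, I₁ and I₂ are the energy, the angular momentum and minus the first component of the
Laplace–Runge–Lenz vector of the planar Kepler problem. Away from the origin all three are smooth,
with explicit gradients; at (x, y, p₁, p₂) = (1, 0, 1, 1) these are (1, 0, 1, 1), (1, -1, 0, 1)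
and (-1, 1, 0, -2), and already the coordinates x, y, p₂ of these vectors form an invertible
3 × 3 matrix.
-/

/-- Partial derivative of a function on ℝ⁴ in the i-th coordinate direction. -/
noncomputable def pd (i : Fin 4) (F : (Fin 4 → ℝ) → ℝ) (v : Fin 4 → ℝ) : ℝ :=
  fderiv ℝ F v (Pi.single i 1)

/-- Gradient (vector of partial derivatives) of a function on ℝ⁴. -/
noncomputable def grad (F : (Fin 4 → ℝ) → ℝ) (v : Fin 4 → ℝ) : Fin 4 → ℝ :=
  fun i => pd i F v

open Real

noncomputable def radius (v : Fin 4 → ℝ) : ℝ := √(v 0 ^ 2 + v 1 ^ 2)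

noncomputable def keplerHamiltonian (v : Fin 4 → ℝ) : ℝ :=
  (v 2 ^ 2 + v 3 ^ 2) / 2 - 1 / radius v

def angularMomentum (v : Fin 4 → ℝ) : ℝ := v 3 * v 0 - v 2 * v 1

noncomputable def lenzComponent (v : Fin 4 → ℝ) : ℝ :=
  v 3 * (v 2 * v 1 - v 3 * v 0) + v 0 / radius v

lemma grad_eq_of_hasFDerivAt {F : (Fin 4 → ℝ) → ℝ} {F' : (Fin 4 → ℝ) →L[ℝ] ℝ}
    {v : Fin 4 → ℝ} (h : HasFDerivAt F F' v) : grad F v = fun i => F' (Pi.single i 1) := by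
  funext i
  rw [grad, pd, h.fderiv]

section gradients

variable {v : Fin 4 → ℝ}

lemma radius_pos (hv : v 0 ^ 2 + v 1 ^ 2 ≠ 0) : 0 < radius v :=
  sqrt_pos.2 (lt_of_le_of_ne (by positivity) hv.symm)

lemma hasFDerivAt_inv_radius (hv : v 0 ^ 2 + v 1 ^ 2 ≠ 0) :
    HasFDerivAt (fun w => (radius w)⁻¹)
      (-(radius v ^ 3)⁻¹ • (v 0 • ContinuousLinearMap.proj 0 + v 1 • ContinuousLinearMap.proj 1 :
        (Fin 4 → ℝ) →L[ℝ] ℝ)) v := by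
  have hsq := ((hasDerivAt_pow 2 (v 0)).comp_hasFDerivAt v (hasFDerivAt_apply (𝕜 := ℝ) 0 v)).add
    ((hasDerivAt_pow 2 (v 1)).comp_hasFDerivAt v (hasFDerivAt_apply (𝕜 := ℝ) 1 v))
  refine (((hasDerivAt_sqrt hv).inv (radius_pos hv).ne').comp_hasFDerivAt v hsq).congr_fderiv ?_
  have hr : radius v ≠ 0 := (radius_pos hv).ne'
  ext w
  simp only [radius, smul_apply, add_apply, ContinuousLinearMap.proj_apply, smul_eq_mul] at hr ⊢
  field_simp
  ring

lemma grad_keplerHamiltonian (hv : v 0 ^ 2 + v 1 ^ 2 ≠ 0) :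
    grad keplerHamiltonian v = ![v 0 / radius v ^ 3, v 1 / radius v ^ 3, v 2, v 3] := by
  have hp := fun i : Fin 4 => hasFDerivAt_apply (𝕜 := ℝ) i v
  have hkin := ((hasDerivAt_pow 2 (v 2)).comp_hasFDerivAt v (hp 2)).add
    ((hasDerivAt_pow 2 (v 3)).comp_hasFDerivAt v (hp 3))
  -- `a / 2` and `1 / r` unfold to `a * 2⁻¹` and `1 * r⁻¹`.
  have h : HasFDerivAt keplerHamiltonian _ v :=
    (hkin.mul_const 2⁻¹).sub ((hasFDerivAt_inv_radius hv).const_mul 1)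
  rw [grad_eq_of_hasFDerivAt h]
  ext i
  fin_cases i <;> simp [div_eq_mul_inv, mul_comm]

lemma grad_angularMomentum : grad angularMomentum v = ![v 3, -v 2, -v 1, v 0] := by
  have hp := fun i : Fin 4 => hasFDerivAt_apply (𝕜 := ℝ) i v
  have h : HasFDerivAt angularMomentum _ v := ((hp 3).mul (hp 0)).sub ((hp 2).mul (hp 1))
  rw [grad_eq_of_hasFDerivAt h]
  ext i
  fin_cases i <;> simp

lemma grad_lenzComponent (hv : v 0 ^ 2 + v 1 ^ 2 ≠ 0) :
    grad lenzComponent v =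
      ![1 / radius v - v 0 ^ 2 / radius v ^ 3 - v 3 ^ 2, v 2 * v 3 - v 0 * v 1 / radius v ^ 3,
        v 3 * v 1, v 2 * v 1 - 2 * v 3 * v 0] := by
  have hp := fun i : Fin 4 => hasFDerivAt_apply (𝕜 := ℝ) i v
  have h : HasFDerivAt lenzComponent _ v :=
    ((hp 3).mul (((hp 2).mul (hp 1)).sub ((hp 3).mul (hp 0)))).add
      ((hp 0).mul (hasFDerivAt_inv_radius hv))
  rw [grad_eq_of_hasFDerivAt h]
  ext i
  fin_cases i <;> simp <;> ring

end gradients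

lemma linearIndependent_gradients_at_base_point :
    LinearIndependent ℝ ![(![1, 0, 1, 1] : Fin 4 → ℝ), ![1, -1, 0, 1], ![-1, 1, 0, -2]] := by
  have hdet : Matrix.det !![(1 : ℝ), 0, 1; 1, -1, 1; -1, 1, -2] ≠ 0 := by
    simp [Matrix.det_fin_three]; norm_num
  have hminor : LinearMap.funLeft ℝ ℝ ![0, 1, 3] ∘
      ![(![1, 0, 1, 1] : Fin 4 → ℝ), ![1, -1, 0, 1], ![-1, 1, 0, -2]] =
        !![(1 : ℝ), 0, 1; 1, -1, 1; -1, 1, -2].row := by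
    ext i j
    fin_cases i <;> fin_cases j <;> rfl
  refine LinearIndependent.of_comp (LinearMap.funLeft ℝ ℝ ![0, 1, 3]) ?_
  rw [hminor]
  exact Matrix.linearIndependent_rows_of_det_ne_zero hdet

/-- H, I₁, I₂ are functionally independent on {x²+y² ≠ 0}: there is a point
where their gradients are linearly independent. -/
theorem functional_independence :
    ∃ v : Fin 4 → ℝ, (v 0)^2 + (v 1)^2 ≠ 0 ∧
      LinearIndependent ℝ
        ![grad (fun v => ((v 2)^2 + (v 3)^2)/2 - 1/Real.sqrt ((v 0)^2 + (v 1)^2)) v,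
          grad (fun v => v 3 * v 0 - v 2 * v 1) v,
          grad (fun v => v 3 * (v 2 * v 1 - v 3 * v 0)
                  + v 0 / Real.sqrt ((v 0)^2 + (v 1)^2)) v] := by
  obtain ⟨v, hx, hy, hp₁, hp₂⟩ : ∃ v : Fin 4 → ℝ, v 0 = 1 ∧ v 1 = 0 ∧ v 2 = 1 ∧ v 3 = 1 :=
    ⟨![1, 0, 1, 1], rfl, rfl, rfl, rfl⟩
  have hv : v 0 ^ 2 + v 1 ^ 2 ≠ 0 := by simp [hx, hy]
  have hr : radius v = 1 := by simp [radius, hx, hy]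
  refine ⟨v, hv, ?_⟩
  change LinearIndependent ℝ
    ![grad keplerHamiltonian v, grad angularMomentum v, grad lenzComponent v]
  rw [grad_keplerHamiltonian hv, grad_angularMomentum, grad_lenzComponent hv, hr, hx, hy, hp₁, hp₂]
  convert linearIndependent_gradients_at_base_point using 1
  norm_num
end

section
/- Let p ∈ ℤ and γ = (−3 + 5p − 2p²)/(1 − 5p + 2p²), assuming the denominator is nonzero. If γ ≥ 0 then γ = 0 or γ = 1. -/
/-
Writing d = 2p² - 5p + 1, the numerator is -d - 2, so γ = -1 - 2/d. This is non-negative only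
when d ∈ {-1, -2}, which gives γ = 1 or γ = 0.
-/

theorem Int.eq_neg_one_or_eq_neg_two_of_nonneg_div {d : ℤ} (hd : d ≠ 0)
    (h : 0 ≤ (-d - 2 : ℚ) / d) : d = -1 ∨ d = -2 := by
  rcases div_nonneg_iff.mp h with ⟨hnum, hden⟩ | ⟨hnum, hden⟩
  · have : d ≤ -2 := by exact_mod_cast (by linarith : (d : ℚ) ≤ -2)
    have : 0 ≤ d := by exact_mod_cast hden
    omega
  · have : -2 ≤ d := by exact_mod_cast (by linarith : (-2 : ℚ) ≤ d)
    have : d ≤ 0 := by exact_mod_cast hden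
    omega

theorem gamma_values_case1 (p : ℤ)
    (hden : (1 - 5 * (p : ℚ) + 2 * (p : ℚ)^2) ≠ 0)
    (γ : ℚ) (hγ : γ = (-3 + 5 * (p : ℚ) - 2 * (p : ℚ)^2) / (1 - 5 * (p : ℚ) + 2 * (p : ℚ)^2))
    (hpos : 0 ≤ γ) : γ = 0 ∨ γ = 1 := by
  set d : ℤ := 2 * p ^ 2 - 5 * p + 1 with hd_def
  have hd_cast : (1 - 5 * (p : ℚ) + 2 * (p : ℚ)^2) = d := by push_cast [hd_def]; ring
  have hγd : γ = (-d - 2 : ℚ) / d := by rw [hγ, hd_cast]; congr 1; push_cast [hd_def]; ring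
  have hd0 : d ≠ 0 := by exact_mod_cast hd_cast ▸ hden
  rcases Int.eq_neg_one_or_eq_neg_two_of_nonneg_div hd0 (hγd ▸ hpos) with h | h
  · right; rw [hγd, h]; norm_num
  · left; rw [hγd, h]; norm_num
end

section
/- Let p ∈ ℤ and γ = (p − 2p²)/(−2 − p + 2p²), assuming the denominator is nonzero. If γ ≥ 0 then γ = 0 or γ = 1. -/
/-! With `m = p (2p - 1)` the formula reads `γ = -m / (m - 2)`. For an integer `p ∉ {0, 1}` one has
`m ≥ 3`, so `γ < 0`; the two remaining values `p = 0` and `p = 1` give `γ = 0` and `γ = 1`. -/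

theorem Int.three_le_mul_two_mul_sub_one {p : ℤ} (h0 : p ≠ 0) (h1 : p ≠ 1) :
    3 ≤ p * (2 * p - 1) := by
  rcases (show p ≤ -1 ∨ 2 ≤ p by omega) with h | h <;> nlinarith

theorem gamma_values_case2_general (p : ℤ)
    (γ : ℚ) (hγ : γ = ((p : ℚ) - 2 * (p : ℚ)^2) / (-2 - (p : ℚ) + 2 * (p : ℚ)^2))
    (hpos : 0 ≤ γ) : γ = 0 ∨ γ = 1 := by
  by_cases h0 : p = 0
  · left; simp [hγ, h0]
  by_cases h1 : p = 1
  · right; rw [hγ, h1]; norm_num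
  have hm : (3 : ℚ) ≤ p * (2 * p - 1) := by exact_mod_cast Int.three_le_mul_two_mul_sub_one h0 h1
  have hneg : γ < 0 := by
    rw [hγ, show (p : ℚ) - 2 * p ^ 2 = -(p * (2 * p - 1)) by ring,
      show -2 - (p : ℚ) + 2 * p ^ 2 = p * (2 * p - 1) - 2 by ring]
    exact div_neg_of_neg_of_pos (by linarith) (by linarith)
  exact absurd hpos hneg.not_ge

theorem gamma_values_case2 (p : ℤ)
    (hden : (-2 - (p : ℚ) + 2 * (p : ℚ)^2) ≠ 0)
    (γ : ℚ) (hγ : γ = ((p : ℚ) - 2 * (p : ℚ)^2) / (-2 - (p : ℚ) + 2 * (p : ℚ)^2))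
    (hpos : 0 ≤ γ) : γ = 0 ∨ γ = 1 :=
  gamma_values_case2_general p γ hγ hpos
end

section
/- Let p ∈ ℤ and γ = (−1 + 3p − 2p²)/(−1 − 3p + 2p²), assuming the denominator is nonzero. If γ ≥ 0 then γ = 0 or γ = 1. -/
/-!
The numerator and denominator of `γ` are integers summing to `-2`. If their ratio is
nonnegative, either one of them vanishes (`γ = 0`, with `x / 0 = 0` for the denominator) or
both are negative, hence both equal `-1` (`γ = 1`).
-/

theorem int_div_eq_zero_or_one_of_add_eq_neg_two {K : Type*} [Field K] [LinearOrder K]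
    [IsStrictOrderedRing K] {a b : ℤ} (hab : a + b = -2) (h : 0 ≤ (a : K) / b) :
    (a : K) / b = 0 ∨ (a : K) / b = 1 := by
  have hcases : a = 0 ∨ b = 0 ∨ (a = -1 ∧ b = -1) := by
    rcases div_nonneg_iff.mp h with ⟨ha, hb⟩ | ⟨ha, hb⟩
    · have : 0 ≤ a := by exact_mod_cast ha
      have : 0 ≤ b := by exact_mod_cast hb
      omega
    · have : a ≤ 0 := by exact_mod_cast ha
      have : b ≤ 0 := by exact_mod_cast hb
      omega
  rcases hcases with rfl | rfl | ⟨rfl, rfl⟩ <;> norm_num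

theorem gamma_values_case3_general (p : ℤ)
    (γ : ℚ) (hγ : γ = (-1 + 3 * (p : ℚ) - 2 * (p : ℚ)^2) / (-1 - 3 * (p : ℚ) + 2 * (p : ℚ)^2))
    (hpos : 0 ≤ γ) : γ = 0 ∨ γ = 1 := by
  have hcast : γ = ((-1 + 3 * p - 2 * p ^ 2 : ℤ) : ℚ) / ((-1 - 3 * p + 2 * p ^ 2 : ℤ) : ℚ) := by
    push_cast
    exact hγ
  rw [hcast] at hpos ⊢
  exact int_div_eq_zero_or_one_of_add_eq_neg_two (by ring) hpos

theorem gamma_values_case3 (p : ℤ)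
    (hden : (-1 - 3 * (p : ℚ) + 2 * (p : ℚ)^2) ≠ 0)
    (γ : ℚ) (hγ : γ = (-1 + 3 * (p : ℚ) - 2 * (p : ℚ)^2) / (-1 - 3 * (p : ℚ) + 2 * (p : ℚ)^2))
    (hpos : 0 ≤ γ) : γ = 0 ∨ γ = 1 :=
  gamma_values_case3_general p γ hγ hpos
end

section
/- Let γ ≥ 0 be real and λ = (1/2)·√((17γ + 1)/(γ + 1)). If λ + 3/2 is an odd integer, or −λ + 3/2 is an odd integer, then γ = 0 or γ = 1. -/
/-!
For `γ ≥ 0` we have `1 ≤ (17γ + 1)/(γ + 1) < 17`, so `λ ∈ [1/2, 5/2)`.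
Then `λ + 3/2 ∈ [2, 4)` and `-λ + 3/2 ∈ (-1, 1]` contain the single odd integers `3` and `1`, forcing
`(17γ + 1)/(γ + 1) = 4λ² = 9` or `1`, that is `γ = 1` or `γ = 0`.
-/

open Set

lemma Int.eq_two_mul_add_one_of_odd_of_cast_mem_Ioo {n m : ℤ} (hn : Odd n)
    (h : (n : ℝ) ∈ Ioo (2 * m - 1 : ℝ) (2 * m + 3)) : n = 2 * m + 1 := by
  obtain ⟨k, rfl⟩ := hn
  have h₁ : 2 * m - 1 < 2 * k + 1 := by exact_mod_cast h.1
  have h₂ : 2 * k + 1 < 2 * m + 3 := by exact_mod_cast h.2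
  omega

lemma sqrt_div_mem_Ico_one_five {γ : ℝ} (hγ : 0 ≤ γ) :
    √((17 * γ + 1) / (γ + 1)) ∈ Ico 1 5 := by
  have hpos : 0 < γ + 1 := by linarith
  constructor
  · rw [Real.one_le_sqrt, one_le_div hpos]
    linarith
  · rw [Real.sqrt_lt' (by norm_num), div_lt_iff₀ hpos]
    linarith

lemma sub_sq_mul_eq_of_sqrt_div_eq {γ s : ℝ} (hγ : 0 ≤ γ)
    (hs : √((17 * γ + 1) / (γ + 1)) = s) : (17 - s ^ 2) * γ = s ^ 2 - 1 := by
  have hpos : 0 < γ + 1 := by linarith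
  have hsq : (17 * γ + 1) / (γ + 1) = s ^ 2 := by
    rw [← hs, Real.sq_sqrt (by positivity)]
  rw [div_eq_iff hpos.ne'] at hsq
  linarith

/-- Kimura's condition ±λ + σ + ν an odd integer (with σ = 1, ν = 1/2) for
λ = (1/2)√((17γ+1)/(γ+1)) forces γ ∈ {0, 1}. -/
theorem kimura_odd_condition (γ : ℝ) (hγ : 0 ≤ γ)
    (lam : ℝ) (hlam : lam = (1/2) * Real.sqrt ((17 * γ + 1)/(γ + 1)))
    (h : (∃ n : ℤ, Odd n ∧ lam + 3/2 = (n : ℝ)) ∨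
         (∃ n : ℤ, Odd n ∧ -lam + 3/2 = (n : ℝ))) :
    γ = 0 ∨ γ = 1 := by
  obtain ⟨hs₁, hs₅⟩ := sqrt_div_mem_Ico_one_five hγ
  rcases h with ⟨n, hodd, hn⟩ | ⟨n, hodd, hn⟩
  · have h3 : n = 2 * 1 + 1 :=
      Int.eq_two_mul_add_one_of_odd_of_cast_mem_Ioo hodd
        ⟨by push_cast; linarith, by push_cast; linarith⟩
    have hs : √((17 * γ + 1) / (γ + 1)) = 3 := by
      rw [h3] at hn
      push_cast at hn
      linarith
    have := sub_sq_mul_eq_of_sqrt_div_eq hγ hs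
    right
    linarith
  · have h1 : n = 2 * 0 + 1 :=
      Int.eq_two_mul_add_one_of_odd_of_cast_mem_Ioo hodd
        ⟨by push_cast; linarith, by push_cast; linarith⟩
    have hs : √((17 * γ + 1) / (γ + 1)) = 1 := by
      rw [h1] at hn
      push_cast at hn
      linarith
    have := sub_sq_mul_eq_of_sqrt_div_eq hγ hs
    left
    linarith
end

section
/- Let γ ≥ 0 be real with λ = (1/2)√((17γ+1)/(γ+1)). If λ = 1/2 + p for some p ∈ ℤ, then γ = 0 or γ = 1. -/
/-! The condition says `√((17γ + 1)/(γ + 1)) = 2p + 1`, a nonnegative odd integer. For `γ ≥ 0` the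
ratio lies in `[1, 17)`, so `(2p + 1)² ∈ {1, 9}`, and solving `17γ + 1 = (2p + 1)² (γ + 1)` gives
`γ = 0` or `γ = 1`. -/

lemma Int.eq_zero_or_eq_one_of_sq_two_mul_add_one_lt {p : ℤ} (h₀ : 0 ≤ 2 * p + 1)
    (h : (2 * p + 1) ^ 2 < 17) : p = 0 ∨ p = 1 := by
  have : p < 2 := by nlinarith
  omega

/-- The Schwarz-table condition λ = 1/2 + p with p ∈ ℤ forces γ ∈ {0, 1}. -/
theorem schwarz_condition (γ : ℝ) (hγ : 0 ≤ γ)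
    (lam : ℝ) (hlam : lam = (1/2) * Real.sqrt ((17 * γ + 1)/(γ + 1)))
    (h : ∃ p : ℤ, lam = 1/2 + (p : ℝ)) :
    γ = 0 ∨ γ = 1 := by
  obtain ⟨p, hp⟩ := h
  have hsqrt : Real.sqrt ((17 * γ + 1) / (γ + 1)) = 2 * p + 1 := by linarith
  have hnonneg : (0 : ℝ) ≤ 2 * p + 1 := hsqrt ▸ Real.sqrt_nonneg _
  have hsq := (Real.sqrt_eq_iff_eq_sq (by positivity) hnonneg).1 hsqrt
  have hcross : 17 * γ + 1 = (2 * p + 1) ^ 2 * (γ + 1) := (div_eq_iff (by positivity)).1 hsq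
  have hlt : ((2 * p + 1) ^ 2 : ℝ) < 17 := by nlinarith
  rcases Int.eq_zero_or_eq_one_of_sq_two_mul_add_one_lt (by exact_mod_cast hnonneg)
    (by exact_mod_cast hlt) with rfl | rfl
  · left; norm_num at hcross; linarith
  · right; norm_num at hcross; linarith
end
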